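/- arXiv:1909.07425 — 3 statements merged into one kernel-verified Lean document; each statement's English description precedes it below -/
import Mathlib

section
/- Fix θ ∈ Θ and assume the local Lipschitz assumption holds at θ with neighborhood U and integrable constant function L. Then for every θ' ∈ U, |D(θ') − D(θ)| ≤ 4 · T · (∫ L dζ) · ‖θ' − θ‖. In particular, under the stated assumptions the function D = sup_{φ∈Φ, η∈Π} CFD²_{ω_η}((f_φ)_*P, (z ↦ f_φ(g(θ,z)))_*ζ) is locally Lipschitz at θ. -/
open MeasureTheory Filter Topology
open scoped NNReal

/-- Characteristic function of a measure on Euclidean space. -/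
noncomputable def charFn {m : ℕ} (μ : Measure (EuclideanSpace ℝ (Fin m)))
    (t : EuclideanSpace ℝ (Fin m)) : ℂ :=
  ∫ x, Complex.exp (Complex.I * ((inner ℝ t x : ℝ) : ℂ)) ∂μ

/-- Squared characteristic function distance between `μ` and `ν` with weighting measure `ω`. -/
noncomputable def CFD2 {m : ℕ} (ω μ ν : Measure (EuclideanSpace ℝ (Fin m))) : ℝ :=
  ∫ t, ‖charFn μ t - charFn ν t‖ ^ 2 ∂ω

private lemma exp_I_sub_one_le (t : ℝ) :
    ‖Complex.exp (Complex.I * t) - 1‖ ≤ |t| := by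
  have h1 : Complex.exp (Complex.I * t) - 1
      = ((Real.cos t - 1 : ℝ) : ℂ) + ((Real.sin t : ℝ) : ℂ) * Complex.I := by
    rw [mul_comm, Complex.exp_mul_I]
    push_cast [Complex.ofReal_cos, Complex.ofReal_sin]
    ring
  have h2 : ‖Complex.exp (Complex.I * t) - 1‖ ^ 2
      = (Real.cos t - 1)^2 + (Real.sin t)^2 := by
    rw [h1, Complex.sq_norm, Complex.normSq_add_mul_I]
  have h3 : (Real.cos t - 1)^2 + (Real.sin t)^2 = 2 - 2 * Real.cos t := by
    have := Real.sin_sq_add_cos_sq t; nlinarith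
  have h4 : Real.cos t = 1 - 2 * Real.sin (t/2) ^ 2 := by
    have h5 := Real.sin_sq_add_cos_sq (t/2)
    have h6 : Real.cos (2 * (t/2)) = 2 * Real.cos (t/2)^2 - 1 := Real.cos_two_mul _
    rw [show 2 * (t/2) = t by ring] at h6
    nlinarith
  have h6 : Real.sin (t/2)^2 ≤ (t/2)^2 := Real.sin_sq_le_sq
  have h7 : ‖Complex.exp (Complex.I * t) - 1‖ ^ 2 ≤ t^2 := by
    rw [h2, h3, h4]; nlinarith
  nlinarith [norm_nonneg (Complex.exp (Complex.I * t) - 1), abs_nonneg t,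
    _root_.sq_abs t]

private lemma exp_I_norm_one (t : ℝ) : ‖Complex.exp (Complex.I * t)‖ = 1 := by
  rw [Complex.norm_exp]
  simp

private lemma exp_I_sub_le (a b : ℝ) :
    ‖Complex.exp (Complex.I * a) - Complex.exp (Complex.I * b)‖ ≤ |a - b| := by
  have h : Complex.exp (Complex.I * a) - Complex.exp (Complex.I * b)
      = Complex.exp (Complex.I * b) * (Complex.exp (Complex.I * (a - b : ℝ)) - 1) := by
    rw [mul_sub, ← Complex.exp_add, mul_one]
    push_cast; ring_nf
  rw [h, norm_mul]
  have h1 : ‖Complex.exp (Complex.I * b)‖ = 1 := exp_I_norm_one b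
  rw [h1, one_mul]
  exact exp_I_sub_one_le _

private lemma charFn_cont {m : ℕ} (μ : Measure (EuclideanSpace ℝ (Fin m)))
    [IsProbabilityMeasure μ] : Continuous (charFn μ) := by
  apply continuous_of_dominated (bound := fun _ => (1 : ℝ))
  · intro t
    exact (Complex.continuous_exp.comp (continuous_const.mul
      (Complex.continuous_ofReal.comp (continuous_const.inner continuous_id)))).aestronglyMeasurable
  · intro t
    exact Eventually.of_forall fun x => le_of_eq (exp_I_norm_one _)
  · exact integrable_const 1
  · exact Eventually.of_forall fun x =>
      Complex.continuous_exp.comp (continuous_const.mul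
        (Complex.continuous_ofReal.comp ((continuous_id.inner continuous_const))))

private lemma charFn_le_one {m : ℕ} (μ : Measure (EuclideanSpace ℝ (Fin m)))
    [IsProbabilityMeasure μ] (t : EuclideanSpace ℝ (Fin m)) :
    ‖charFn μ t‖ ≤ 1 := by
  have := norm_integral_le_of_norm_le_const (μ := μ) (C := 1)
    (f := fun x => Complex.exp (Complex.I * ((inner ℝ t x : ℝ) : ℂ)))
    (Eventually.of_forall fun x => le_of_eq (exp_I_norm_one _))
  simpa [charFn] using this

private lemma exp_inner_integrable {Z : Type*} [MeasurableSpace Z] (ζ : Measure Z)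
    [IsProbabilityMeasure ζ] {m : ℕ} (h : Z → EuclideanSpace ℝ (Fin m)) (hm : Measurable h)
    (t : EuclideanSpace ℝ (Fin m)) :
    Integrable (fun z => Complex.exp (Complex.I * ((inner ℝ t (h z) : ℝ) : ℂ))) ζ := by
  refine Integrable.mono' (integrable_const (1 : ℝ)) ?_
    (Eventually.of_forall fun z => le_of_eq (exp_I_norm_one _))
  exact (((Complex.continuous_exp.comp (continuous_const.mul
    (Complex.continuous_ofReal.comp (continuous_const.inner continuous_id)))).measurable.comp
    hm)).aestronglyMeasurable

private lemma charFn_map_eq {Z : Type*} [MeasurableSpace Z] (ζ : Measure Z)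
    {m : ℕ} (h : Z → EuclideanSpace ℝ (Fin m)) (hm : Measurable h)
    (t : EuclideanSpace ℝ (Fin m)) :
    charFn (ζ.map h) t = ∫ z, Complex.exp (Complex.I * ((inner ℝ t (h z) : ℝ) : ℂ)) ∂ζ := by
  rw [charFn, integral_map hm.aemeasurable]
  exact (Complex.continuous_exp.comp (continuous_const.mul
    (Complex.continuous_ofReal.comp (continuous_const.inner continuous_id)))).aestronglyMeasurable

private lemma charFn_map_sub_le {Z : Type*} [MeasurableSpace Z] (ζ : Measure Z)
    [IsProbabilityMeasure ζ] {m : ℕ} (h h' : Z → EuclideanSpace ℝ (Fin m))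
    (hm : Measurable h) (hm' : Measurable h') (B : Z → ℝ) (hBint : Integrable B ζ)
    (hB : ∀ z, ‖h' z - h z‖ ≤ B z) (t : EuclideanSpace ℝ (Fin m)) :
    ‖charFn (ζ.map h') t - charFn (ζ.map h) t‖ ≤ ‖t‖ * ∫ z, B z ∂ζ := by
  rw [charFn_map_eq ζ h hm, charFn_map_eq ζ h' hm',
    ← integral_sub (exp_inner_integrable ζ h' hm' t) (exp_inner_integrable ζ h hm t)]
  calc ‖∫ z, (Complex.exp (Complex.I * ((inner ℝ t (h' z) : ℝ) : ℂ))
        - Complex.exp (Complex.I * ((inner ℝ t (h z) : ℝ) : ℂ))) ∂ζ‖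
      ≤ ∫ z, ‖Complex.exp (Complex.I * ((inner ℝ t (h' z) : ℝ) : ℂ))
        - Complex.exp (Complex.I * ((inner ℝ t (h z) : ℝ) : ℂ))‖ ∂ζ := by
        exact norm_integral_le_integral_norm
          (fun z => Complex.exp (Complex.I * ((inner ℝ t (h' z) : ℝ) : ℂ))
            - Complex.exp (Complex.I * ((inner ℝ t (h z) : ℝ) : ℂ)))
    _ ≤ ∫ z, ‖t‖ * B z ∂ζ := by
        refine integral_mono ?_ (hBint.const_mul _) ?_
        · refine Integrable.mono' (integrable_const (2 : ℝ)) ?_ ?_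
          · exact (((exp_inner_integrable ζ h' hm' t).aestronglyMeasurable.sub
              (exp_inner_integrable ζ h hm t).aestronglyMeasurable)).norm
          · refine Eventually.of_forall fun z => ?_
            have h1 := norm_sub_le (Complex.exp (Complex.I * ((inner ℝ t (h' z) : ℝ) : ℂ)))
              (Complex.exp (Complex.I * ((inner ℝ t (h z) : ℝ) : ℂ)))
            rw [exp_I_norm_one, exp_I_norm_one] at h1
            have h2 : ‖Complex.exp (Complex.I * ((inner ℝ t (h' z) : ℝ) : ℂ))
                - Complex.exp (Complex.I * ((inner ℝ t (h z) : ℝ) : ℂ))‖ ≤ 2 :=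
              h1.trans (by norm_num)
            calc ‖‖Complex.exp (Complex.I * ((inner ℝ t (h' z) : ℝ) : ℂ))
                - Complex.exp (Complex.I * ((inner ℝ t (h z) : ℝ) : ℂ))‖‖
                = ‖Complex.exp (Complex.I * ((inner ℝ t (h' z) : ℝ) : ℂ))
                  - Complex.exp (Complex.I * ((inner ℝ t (h z) : ℝ) : ℂ))‖ :=
                  norm_norm (Complex.exp (Complex.I * ((inner ℝ t (h' z) : ℝ) : ℂ))
                    - Complex.exp (Complex.I * ((inner ℝ t (h z) : ℝ) : ℂ)))
              _ ≤ 2 := h2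
        · intro z
          calc ‖Complex.exp (Complex.I * ((inner ℝ t (h' z) : ℝ) : ℂ))
              - Complex.exp (Complex.I * ((inner ℝ t (h z) : ℝ) : ℂ))‖
              ≤ |(inner ℝ t (h' z) : ℝ) - (inner ℝ t (h z) : ℝ)| :=
                exp_I_sub_le (inner ℝ t (h' z)) (inner ℝ t (h z))
            _ = |(inner ℝ t (h' z - h z) : ℝ)| := by rw [inner_sub_right]
            _ ≤ ‖t‖ * ‖h' z - h z‖ := abs_real_inner_le_norm _ _
            _ ≤ ‖t‖ * B z := by
                exact mul_le_mul_of_nonneg_left (hB z) (norm_nonneg t)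
    _ = ‖t‖ * ∫ z, B z ∂ζ := integral_const_mul _ _

private lemma cfd2_integrand_integrable {m : ℕ} (ω μ ν : Measure (EuclideanSpace ℝ (Fin m)))
    [IsFiniteMeasure ω] [IsProbabilityMeasure μ] [IsProbabilityMeasure ν] :
    Integrable (fun t => ‖charFn μ t - charFn ν t‖ ^ 2) ω := by
  refine Integrable.mono' (integrable_const (4 : ℝ)) ?_ ?_
  · exact (((charFn_cont μ).sub (charFn_cont ν)).norm.pow 2).aestronglyMeasurable
  · refine Eventually.of_forall fun t => ?_
    have h1 : ‖charFn μ t - charFn ν t‖ ≤ 2 := by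
      calc ‖charFn μ t - charFn ν t‖
          ≤ ‖charFn μ t‖ + ‖charFn ν t‖ :=
            norm_sub_le (charFn μ t) (charFn ν t)
        _ ≤ 2 := by linarith [charFn_le_one μ t, charFn_le_one ν t]
    have h0 := norm_nonneg (charFn μ t - charFn ν t)
    rw [Real.norm_eq_abs, abs_of_nonneg (by positivity)]
    nlinarith

private lemma cfd2_diff_le {m : ℕ} (ω μ ν ν' : Measure (EuclideanSpace ℝ (Fin m)))
    [IsProbabilityMeasure ω] [IsProbabilityMeasure μ] [IsProbabilityMeasure ν]
    [IsProbabilityMeasure ν'] (C T : ℝ) (hC : 0 ≤ C)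
    (hωint : Integrable (fun t => ‖t‖) ω) (hωT : (∫ t, ‖t‖ ∂ω) ≤ T)
    (h : ∀ t, ‖charFn ν' t - charFn ν t‖ ≤ ‖t‖ * C) :
    |CFD2 ω μ ν' - CFD2 ω μ ν| ≤ 4 * T * C := by
  have hi' := cfd2_integrand_integrable ω μ ν'
  have hi := cfd2_integrand_integrable ω μ ν
  rw [CFD2, CFD2, ← integral_sub hi' hi]
  calc |∫ t, (‖charFn μ t - charFn ν' t‖ ^ 2
        - ‖charFn μ t - charFn ν t‖ ^ 2) ∂ω|
      ≤ ∫ t, |‖charFn μ t - charFn ν' t‖ ^ 2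
        - ‖charFn μ t - charFn ν t‖ ^ 2| ∂ω := by
        simpa [Real.norm_eq_abs] using norm_integral_le_integral_norm
          (fun t => ‖charFn μ t - charFn ν' t‖ ^ 2
            - ‖charFn μ t - charFn ν t‖ ^ 2) (μ := ω)
    _ ≤ ∫ t, 4 * C * ‖t‖ ∂ω := by
        refine integral_mono (hi'.sub hi).abs ((hωint.const_mul _)) fun t => ?_
        have h1 : ‖charFn μ t - charFn ν' t‖ ≤ 2 := by
          calc ‖charFn μ t - charFn ν' t‖
              ≤ ‖charFn μ t‖ + ‖charFn ν' t‖ :=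
                norm_sub_le (charFn μ t) (charFn ν' t)
            _ ≤ 2 := by linarith [charFn_le_one μ t, charFn_le_one ν' t]
        have h2 : ‖charFn μ t - charFn ν t‖ ≤ 2 := by
          calc ‖charFn μ t - charFn ν t‖
              ≤ ‖charFn μ t‖ + ‖charFn ν t‖ :=
                norm_sub_le (charFn μ t) (charFn ν t)
            _ ≤ 2 := by linarith [charFn_le_one μ t, charFn_le_one ν t]
        have h3 : |‖charFn μ t - charFn ν' t‖
            - ‖charFn μ t - charFn ν t‖|
            ≤ ‖charFn ν' t - charFn ν t‖ := by
          have := abs_norm_sub_norm_le (charFn μ t - charFn ν' t) (charFn μ t - charFn ν t)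
          have he : (charFn μ t - charFn ν' t) - (charFn μ t - charFn ν t)
              = -(charFn ν' t - charFn ν t) := by ring
          rw [he, norm_neg] at this
          exact this
        have h4 := h t
        have h0' := norm_nonneg (charFn μ t - charFn ν' t)
        have h0 := norm_nonneg (charFn μ t - charFn ν t)
        have habs := abs_le.mp h3
        rw [abs_le]
        constructor <;> nlinarith [norm_nonneg t]
    _ = 4 * C * ∫ t, ‖t‖ ∂ω := integral_const_mul _ _
    _ ≤ 4 * T * C := by nlinarith

private lemma ciSup_diff_le {ι : Type*} [Nonempty ι] (a b : ι → ℝ) (K M : ℝ)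
    (ha : ∀ i, a i ≤ M) (hb : ∀ i, b i ≤ M) (hab : ∀ i, |a i - b i| ≤ K) :
    |(⨆ i, a i) - ⨆ i, b i| ≤ K := by
  have hba : BddAbove (Set.range a) := ⟨M, Set.forall_mem_range.mpr ha⟩
  have hbb : BddAbove (Set.range b) := ⟨M, Set.forall_mem_range.mpr hb⟩
  rw [abs_sub_le_iff]
  constructor
  · rw [sub_le_iff_le_add]
    refine ciSup_le fun i => ?_
    have := (abs_le.mp (hab i)).2
    calc a i ≤ b i + K := by linarith
      _ ≤ (⨆ i, b i) + K := by
          have := le_ciSup hbb i; linarith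
      _ = K + ⨆ i, b i := by ring
  · rw [sub_le_iff_le_add]
    refine ciSup_le fun i => ?_
    have := (abs_le.mp (hab i)).1
    calc b i ≤ a i + K := by linarith
      _ ≤ (⨆ i, a i) + K := by
          have := le_ciSup hba i; linarith
      _ = K + ⨆ i, a i := by ring

/-- quantitative local Lipschitz bound for
`D θ = sup_{φ,η} CFD²_{ω_η}((f_φ)_*P, (z ↦ f_φ(g(θ,z)))_*ζ)` under the local Lipschitz
assumption at θ. -/
theorem cfd_sup_locally_lipschitz
    {Θ : Type*} [NormedAddCommGroup Θ] [NormedSpace ℝ Θ]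
    {Z : Type*} [MeasurableSpace Z] (ζ : Measure Z) [IsProbabilityMeasure ζ]
    {d m : ℕ} (P : Measure (EuclideanSpace ℝ (Fin d))) [IsProbabilityMeasure P]
    {Φ W : Type*} [Nonempty Φ] [Nonempty W]
    (f : Φ → EuclideanSpace ℝ (Fin d) → EuclideanSpace ℝ (Fin m))
    (hf : ∀ φ, Measurable (f φ))
    (g : Θ → Z → EuclideanSpace ℝ (Fin d))
    (hg : ∀ θ, Measurable (g θ))
    (ω : W → Measure (EuclideanSpace ℝ (Fin m)))
    (hω : ∀ η, IsProbabilityMeasure (ω η))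
    (T : ℝ)
    (hTint : ∀ η, Integrable (fun t => ‖t‖) (ω η))
    (hT : ∀ η, (∫ t, ‖t‖ ∂(ω η)) ≤ T)
    (D : Θ → ℝ)
    (hD : ∀ θ, D θ = ⨆ p : Φ × W,
      CFD2 (ω p.2) (P.map (f p.1)) (ζ.map (fun z => f p.1 (g θ z))))
    (θ : Θ) (U : Set Θ) (hU : IsOpen U) (hθU : θ ∈ U)
    (L : Z → ℝ) (hLmeas : Measurable L) (hLnonneg : ∀ z, 0 ≤ L z)
    (hLint : Integrable L ζ)
    (hLip : ∀ θ' ∈ U, ∀ z : Z, ∀ φ : Φ,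
      ‖f φ (g θ' z) - f φ (g θ z)‖ ≤ L z * ‖θ' - θ‖) :
    ∀ θ' ∈ U, |D θ' - D θ| ≤ 4 * T * (∫ z, L z ∂ζ) * ‖θ' - θ‖ := by
  intro θ' hθ'
  have hT0 : 0 ≤ T := le_trans (integral_nonneg fun t => norm_nonneg t) (hT (Classical.arbitrary W))
  set C : ℝ := (∫ z, L z ∂ζ) * ‖θ' - θ‖ with hCdef
  have hC : 0 ≤ C := mul_nonneg (integral_nonneg hLnonneg) (norm_nonneg _)
  rw [hD θ', hD θ]
  have key : ∀ p : Φ × W,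
      |CFD2 (ω p.2) (P.map (f p.1)) (ζ.map (fun z => f p.1 (g θ' z)))
        - CFD2 (ω p.2) (P.map (f p.1)) (ζ.map (fun z => f p.1 (g θ z)))| ≤ 4 * T * C := by
    intro ⟨φ, η⟩
    have := hω η
    have hPm : IsProbabilityMeasure (P.map (f φ)) :=
      Measure.isProbabilityMeasure_map (hf φ).aemeasurable
    have hν : IsProbabilityMeasure (ζ.map (fun z => f φ (g θ z))) :=
      Measure.isProbabilityMeasure_map ((hf φ).comp (hg θ)).aemeasurable
    have hν' : IsProbabilityMeasure (ζ.map (fun z => f φ (g θ' z))) :=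
      Measure.isProbabilityMeasure_map ((hf φ).comp (hg θ')).aemeasurable
    refine cfd2_diff_le (ω η) (P.map (f φ)) _ _ C T hC (hTint η) (hT η) ?_
    intro t
    have := charFn_map_sub_le ζ (fun z => f φ (g θ z)) (fun z => f φ (g θ' z))
      ((hf φ).comp (hg θ)) ((hf φ).comp (hg θ'))
      (fun z => L z * ‖θ' - θ‖) (hLint.mul_const _)
      (fun z => hLip θ' hθ' z φ) t
    calc ‖charFn (ζ.map fun z => f φ (g θ' z)) t
          - charFn (ζ.map fun z => f φ (g θ z)) t‖
        ≤ ‖t‖ * ∫ z, L z * ‖θ' - θ‖ ∂ζ := this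
      _ = ‖t‖ * C := by rw [hCdef, integral_mul_const]
  have hbound : ∀ (θ₀ : Θ) (p : Φ × W),
      CFD2 (ω p.2) (P.map (f p.1)) (ζ.map (fun z => f p.1 (g θ₀ z))) ≤ 4 := by
    intro θ₀ ⟨φ, η⟩
    have := hω η
    have hPm : IsProbabilityMeasure (P.map (f φ)) :=
      Measure.isProbabilityMeasure_map (hf φ).aemeasurable
    have hν : IsProbabilityMeasure (ζ.map (fun z => f φ (g θ₀ z))) :=
      Measure.isProbabilityMeasure_map ((hf φ).comp (hg θ₀)).aemeasurable
    rw [CFD2]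
    calc ∫ t, ‖charFn (P.map (f φ)) t
          - charFn (ζ.map fun z => f φ (g θ₀ z)) t‖ ^ 2 ∂(ω η)
        ≤ ∫ _t, (4 : ℝ) ∂(ω η) := by
          refine integral_mono (cfd2_integrand_integrable _ _ _) (integrable_const _) fun t => ?_
          have h1 : ‖charFn (P.map (f φ)) t
              - charFn (ζ.map fun z => f φ (g θ₀ z)) t‖ ≤ 2 := by
            calc ‖_‖ ≤ ‖charFn (P.map (f φ)) t‖
                + ‖charFn (ζ.map fun z => f φ (g θ₀ z)) t‖ :=
                  norm_sub_le (charFn (P.map (f φ)) t) (charFn (ζ.map fun z => f φ (g θ₀ z)) t)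
              _ ≤ 2 := by linarith [charFn_le_one (P.map (f φ)) t,
                  charFn_le_one (ζ.map fun z => f φ (g θ₀ z)) t]
          nlinarith [norm_nonneg (charFn (P.map (f φ)) t
            - charFn (ζ.map fun z => f φ (g θ₀ z)) t)]
      _ = 4 := by simp
  have := ciSup_diff_le
    (fun p : Φ × W => CFD2 (ω p.2) (P.map (f p.1)) (ζ.map (fun z => f p.1 (g θ' z))))
    (fun p : Φ × W => CFD2 (ω p.2) (P.map (f p.1)) (ζ.map (fun z => f p.1 (g θ z))))
    (4 * T * C) 4 (hbound θ') (hbound θ) key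
  calc |_ - _| ≤ 4 * T * C := this
    _ = 4 * T * (∫ z, L z ∂ζ) * ‖θ' - θ‖ := by rw [hCdef]; ring
end

section
/- Let P and Q be probability measures on ℝ^d, and let ω be a probability measure on ℝ^d whose topological support is all of ℝ^d. Then CFD²_ω(P, Q) = 0 if and only if P = Q. -/
open MeasureTheory Filter Topology
open scoped NNReal

open Function Real FourierTransform Metric
open scoped Manifold

section Aux

/-- A smooth compactly supported function as a Schwartz map. -/
noncomputable def mySchwartz {V : Type*} [NormedAddCommGroup V] [NormedSpace ℝ V]
    (f : V → ℂ) (hf : ContDiff ℝ ((⊤ : ℕ∞) : WithTop ℕ∞) f)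
    (h2 : HasCompactSupport f) : SchwartzMap V ℂ where
  toFun := f
  smooth' := hf
  decay' := by
    intro k n
    have h3 : HasCompactSupport (iteratedFDeriv ℝ n f) := h2.iteratedFDeriv n
    have hcont : Continuous (fun x => ‖x‖ ^ k * ‖iteratedFDeriv ℝ n f x‖) := by
      have h5 : Continuous (iteratedFDeriv ℝ n f) :=
        hf.continuous_iteratedFDeriv (m := n) (by exact_mod_cast le_top)
      exact (continuous_norm.pow k).mul h5.norm
    have h4 : HasCompactSupport (fun x => ‖x‖ ^ k * ‖iteratedFDeriv ℝ n f x‖) :=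
      HasCompactSupport.mul_left h3.norm
    obtain ⟨C, hC⟩ := hcont.bounded_above_of_compact_support h4
    refine ⟨C, fun x => ?_⟩
    have := hC x
    rwa [Real.norm_eq_abs, abs_of_nonneg (by positivity)] at this

@[simp] lemma mySchwartz_coe {V : Type*} [NormedAddCommGroup V] [NormedSpace ℝ V]
    (f : V → ℂ) (hf : ContDiff ℝ ((⊤ : ℕ∞) : WithTop ℕ∞) f) (h2 : HasCompactSupport f) :
    ⇑(mySchwartz f hf h2) = f := rfl

variable {d : ℕ}
local notation "E" => EuclideanSpace ℝ (Fin d)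

lemma integral_schwartz_eq (P : Measure E) [IsProbabilityMeasure P] (g : SchwartzMap E ℂ) :
    ∫ x, g x ∂P = ∫ w, charFn P ((2 * π) • w) * 𝓕 (⇑g) w := by
  have hFg : Integrable (𝓕 (⇑g)) volume := by
    simpa [SchwartzMap.fourier_coe] using (SchwartzMap.fourierTransformCLM ℂ g).integrable
  have hFgc : Continuous (𝓕 (⇑g)) := by
    have := (SchwartzMap.fourierTransformCLM ℂ g).continuous
    simpa [SchwartzMap.fourier_coe] using this
  set Φ : E × E → ℂ :=
    fun p => Complex.exp (Complex.I * ((inner ℝ ((2 * π) • p.2) p.1 : ℝ) : ℂ)) * 𝓕 (⇑g) p.2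
    with hΦ
  have hnorm : ∀ p : E × E, ‖Φ p‖ = ‖𝓕 (⇑g) p.2‖ := by
    intro p
    rw [hΦ, norm_mul]
    have : ‖Complex.exp (Complex.I * ((inner ℝ ((2 * π) • p.2) p.1 : ℝ) : ℂ))‖ = 1 := by
      rw [mul_comm, Complex.norm_exp_ofReal_mul_I]
    rw [this, one_mul]
  have hΦc : Continuous Φ := by
    apply Continuous.mul
    · apply Complex.continuous_exp.comp
      apply Continuous.mul continuous_const
      exact Complex.continuous_ofReal.comp
        (continuous_inner.comp ((continuous_const_smul _).comp continuous_snd |>.prodMk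
          continuous_fst))
    · exact hFgc.comp continuous_snd
  have hginv : ∀ x : E, g x = ∫ w, Φ (x, w) := by
    intro x
    conv_lhs => rw [← Continuous.fourierInv_fourier_eq g.continuous g.integrable hFg]
    rw [Real.fourierInv_eq]
    congr 1
    ext w
    rw [hΦ, Circle.smul_def, Real.fourierChar_apply]
    simp only [smul_eq_mul, real_inner_smul_left]
    push_cast
    ring_nf
  have hint : Integrable (Function.uncurry fun (x : E) (w : E) => Φ (x, w)) (P.prod volume) := by
    rw [show Function.uncurry (fun (x : E) (w : E) => Φ (x, w)) = Φ by
      ext p; simp [Function.uncurry]]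
    rw [integrable_prod_iff hΦc.aestronglyMeasurable]
    constructor
    · filter_upwards with x
      apply hFg.bdd_mul (c := 1)
      · have : Continuous fun w : E =>
            Complex.exp (Complex.I * ((inner ℝ ((2 * π) • w) x : ℝ) : ℂ)) := by
          exact Complex.continuous_exp.comp (continuous_const.mul
            (Complex.continuous_ofReal.comp (continuous_inner.comp
              ((continuous_const_smul _).prodMk continuous_const))))
        exact this.aestronglyMeasurable
      · filter_upwards with w
        rw [mul_comm, Complex.norm_exp_ofReal_mul_I]
    · apply Integrable.congr (integrable_const (∫ w : E, ‖𝓕 (⇑g) w‖))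
      filter_upwards with x
      congr 1
      ext w
      rw [hnorm (x, w)]
  calc ∫ x, g x ∂P = ∫ x, ∫ w, Φ (x, w) ∂volume ∂P := by
        congr 1; ext x; exact hginv x
    _ = ∫ w, ∫ x, Φ (x, w) ∂P ∂volume := integral_integral_swap hint
    _ = ∫ w, charFn P ((2 * π) • w) * 𝓕 (⇑g) w := by
        congr 1; ext w
        rw [show (fun x => Φ (x, w)) = fun x =>
          Complex.exp (Complex.I * ((inner ℝ ((2 * π) • w) x : ℝ) : ℂ)) * 𝓕 (⇑g) w from rfl]
        rw [integral_mul_const]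
        rfl

lemma smooth_cutoff (K : Set E) (hKc : IsCompact K) (δ : ℝ) (hδ : 0 < δ) :
    ∃ f : E → ℝ, ContDiff ℝ ((⊤ : ℕ∞) : WithTop ℕ∞) f ∧ HasCompactSupport f ∧
      Set.EqOn f 1 K ∧ (∀ x, f x ∈ Set.Icc (0:ℝ) 1) ∧
      ∀ x, x ∉ Metric.thickening δ K → f x = 0 := by
  obtain ⟨f, hf0, hf1, hf01⟩ := exists_contMDiffMap_zero_one_of_isClosed (𝓘(ℝ, E)) (n := (⊤ : ℕ∞))
    (isClosed_compl_iff.2 (Metric.isOpen_thickening : IsOpen (Metric.thickening δ K)))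
    hKc.isClosed
    (disjoint_compl_left_iff.2 (Metric.self_subset_thickening hδ K))
  refine ⟨f, ?_, ?_, hf1, hf01, fun x hx => hf0 hx⟩
  · exact contMDiff_iff_contDiff.1 f.contMDiff
  · apply HasCompactSupport.of_support_subset_isCompact (hKc.cthickening (r := δ))
    intro x hx
    by_contra hxc
    have : x ∈ (Metric.thickening δ K)ᶜ := fun hmem =>
      hxc (Metric.thickening_subset_cthickening δ K hmem)
    exact hx (hf0 this)

lemma measure_ext_of_charFn (P Q : Measure E) [IsProbabilityMeasure P] [IsProbabilityMeasure Q]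
    (h : charFn P = charFn Q) : P = Q := by
  have hS : ∀ g : SchwartzMap E ℂ, ∫ x, g x ∂P = ∫ x, g x ∂Q := fun g => by
    rw [integral_schwartz_eq, integral_schwartz_eq, h]
  have hsm : ∀ f : E → ℝ, ContDiff ℝ ((⊤ : ℕ∞) : WithTop ℕ∞) f → HasCompactSupport f →
      ∫ x, f x ∂P = ∫ x, f x ∂Q := by
    intro f hf h2
    have hfc : ContDiff ℝ ((⊤ : ℕ∞) : WithTop ℕ∞) (fun x : E => (f x : ℂ)) :=
      Complex.ofRealCLM.contDiff.comp hf
    have h2c : HasCompactSupport (fun x : E => (f x : ℂ)) :=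
      h2.comp_left (g := fun r : ℝ => (r : ℂ)) (by simp)
    have h3 := hS (mySchwartz _ hfc h2c)
    simp only [mySchwartz_coe] at h3
    have e1 : ∫ x, ((f x : ℝ) : ℂ) ∂P = ((∫ x, f x ∂P : ℝ) : ℂ) := integral_ofReal
    have e2 : ∫ x, ((f x : ℝ) : ℂ) ∂Q = ((∫ x, f x ∂Q : ℝ) : ℂ) := integral_ofReal
    rw [e1, e2] at h3
    exact_mod_cast h3
  have hK : ∀ K : Set E, IsCompact K → P K = Q K := by
    intro K hKc
    rcases K.eq_empty_or_nonempty with rfl | hne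
    · simp
    choose F hF1 hF2 hF3 hF4 hF5 using fun n : ℕ =>
      smooth_cutoff K hKc (1 / (n + 1)) (by positivity)
    have hPQ : ∀ n, ∫ x, F n x ∂P = ∫ x, F n x ∂Q := fun n => hsm _ (hF1 n) (hF2 n)
    have hlim : ∀ (μ : Measure E), IsProbabilityMeasure μ →
        Tendsto (fun n => ∫ x, F n x ∂μ) atTop (𝓝 ((μ K).toReal)) := by
      intro μ hμ
      have hind : (μ K).toReal = ∫ x, K.indicator 1 x ∂μ :=
        (integral_indicator_one hKc.measurableSet).symm
      rw [hind]
      apply tendsto_integral_of_dominated_convergence (bound := fun _ => 1)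
      · intro n
        exact ((hF1 n).continuous).aestronglyMeasurable
      · exact integrable_const 1
      · intro n
        filter_upwards with x
        rw [Real.norm_eq_abs, abs_of_nonneg (hF4 n x).1]
        exact (hF4 n x).2
      · filter_upwards with x
        by_cases hx : x ∈ K
        · have heq : ∀ n, F n x = 1 := fun n => hF3 n hx
          simp only [heq, Set.indicator_of_mem hx, Pi.one_apply]
          exact tendsto_const_nhds
        · rw [Set.indicator_of_notMem hx]
          have hpos : 0 < infDist x K := (hKc.isClosed.notMem_iff_infDist_pos hne).1 hx
          obtain ⟨N, hN⟩ := exists_nat_gt (1 / infDist x K)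
          apply tendsto_const_nhds.congr'
          filter_upwards [eventually_ge_atTop N] with n hn
          refine (hF5 n x fun hmem => ?_).symm
          rw [Metric.mem_thickening_iff_infDist_lt hne] at hmem
          have h1 : (1 : ℝ) / infDist x K < (n : ℝ) + 1 :=
            lt_of_lt_of_le hN (by exact_mod_cast Nat.le_succ_of_le hn)
          have h2 : (1 : ℝ) / ((n : ℝ) + 1) < infDist x K :=
            (one_div_lt (by positivity) hpos).2 h1
          exact absurd hmem (not_lt.2 h2.le)
    have h1 := (hlim P ‹_›).congr hPQ
    have h2 := hlim Q ‹_›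
    have h3 := tendsto_nhds_unique h1 h2
    exact (ENNReal.toReal_eq_toReal_iff' (measure_ne_top P K) (measure_ne_top Q K)).1 h3
  ext s hs
  rw [hs.measure_eq_iSup_isCompact_of_ne_top (measure_ne_top P s),
      hs.measure_eq_iSup_isCompact_of_ne_top (measure_ne_top Q s)]
  exact iSup_congr fun K => iSup_congr fun _ => iSup_congr fun hKc => hK K hKc

lemma charFn_continuous (μ : Measure E) [IsProbabilityMeasure μ] : Continuous (charFn μ) := by
  apply continuous_of_dominated (bound := fun _ => 1)
    (F := fun t x => Complex.exp (Complex.I * ((inner ℝ t x : ℝ) : ℂ)))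
  · intro t
    have : Continuous fun x : E => Complex.exp (Complex.I * ((inner ℝ t x : ℝ) : ℂ)) :=
      Complex.continuous_exp.comp (continuous_const.mul
        (Complex.continuous_ofReal.comp
          (continuous_inner.comp (continuous_const.prodMk continuous_id))))
    exact this.aestronglyMeasurable
  · intro t
    filter_upwards with x
    rw [mul_comm, Complex.norm_exp_ofReal_mul_I]
  · exact integrable_const 1
  · filter_upwards with x
    exact Complex.continuous_exp.comp (continuous_const.mul
      (Complex.continuous_ofReal.comp
        (continuous_inner.comp (continuous_id.prodMk continuous_const))))

lemma norm_charFn_le_one (μ : Measure E) [IsProbabilityMeasure μ] (t : E) :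
    ‖charFn μ t‖ ≤ 1 := by
  calc ‖charFn μ t‖ ≤ ∫ x, ‖Complex.exp (Complex.I * ((inner ℝ t x : ℝ) : ℂ))‖ ∂μ :=
        norm_integral_le_integral_norm _
    _ = ∫ (_ : E), (1 : ℝ) ∂μ := by
        congr 1; ext x; rw [mul_comm, Complex.norm_exp_ofReal_mul_I]
    _ = 1 := by simp

end Aux

/-- if the topological support of ω is all of ℝ^d (every nonempty open set has
positive ω-measure), then CFD²_ω(P, Q) = 0 ↔ P = Q. -/
theorem cfd_eq_zero_iff
    {d : ℕ}
    (P Q : Measure (EuclideanSpace ℝ (Fin d)))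
    (hP : IsProbabilityMeasure P) (hQ : IsProbabilityMeasure Q)
    (ω : Measure (EuclideanSpace ℝ (Fin d))) (hω : IsProbabilityMeasure ω)
    (hsupp : ∀ U : Set (EuclideanSpace ℝ (Fin d)), IsOpen U → U.Nonempty → 0 < ω U) :
    CFD2 ω P Q = 0 ↔ P = Q := by
  constructor
  · intro h
    have hΔc : Continuous fun t => charFn P t - charFn Q t :=
      (charFn_continuous P).sub (charFn_continuous Q)
    have hfc : Continuous fun t => ‖charFn P t - charFn Q t‖ ^ 2 :=
      (continuous_norm.comp hΔc).pow 2
    have hint : Integrable (fun t => ‖charFn P t - charFn Q t‖ ^ 2) ω := by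
      apply (integrable_const (4 : ℝ)).mono' hfc.aestronglyMeasurable
      filter_upwards with t
      rw [Real.norm_eq_abs, abs_of_nonneg (by positivity)]
      have hb : ‖charFn P t - charFn Q t‖ ≤ 2 := by
        calc ‖charFn P t - charFn Q t‖ ≤ ‖charFn P t‖ + ‖charFn Q t‖ := norm_sub_le _ _
          _ ≤ 1 + 1 := add_le_add (norm_charFn_le_one P t) (norm_charFn_le_one Q t)
          _ = 2 := by norm_num
      calc ‖charFn P t - charFn Q t‖ ^ 2 ≤ 2 ^ 2 := by
            apply pow_le_pow_left₀ (norm_nonneg _) hb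
        _ = 4 := by norm_num
    have hzero : (fun t => ‖charFn P t - charFn Q t‖ ^ 2) =ᵐ[ω] 0 :=
      (integral_eq_zero_iff_of_nonneg (fun t => by positivity) hint).1 h
    have hmeas0 : ω {t | charFn P t - charFn Q t ≠ 0} = 0 := by
      have h4 := hzero
      rw [Filter.EventuallyEq, ae_iff] at h4
      have hset : {t | charFn P t - charFn Q t ≠ 0}
          = {a | ¬ ‖charFn P a - charFn Q a‖ ^ 2 = (0 : (EuclideanSpace ℝ (Fin d)) → ℝ) a} := by
        ext t
        simp only [Set.mem_setOf_eq, Pi.zero_apply, pow_eq_zero_iff (two_ne_zero), norm_eq_zero]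
      rw [hset]
      exact h4
    have hU : {t | charFn P t - charFn Q t ≠ 0} = ∅ := by
      by_contra hne
      have hopen : IsOpen {t | charFn P t - charFn Q t ≠ 0} :=
        isOpen_compl_singleton.preimage hΔc
      have := hsupp _ hopen (Set.nonempty_iff_ne_empty.2 hne)
      rw [hmeas0] at this
      exact lt_irrefl _ this
    have hchar : charFn P = charFn Q := by
      funext t
      have : t ∉ ({t | charFn P t - charFn Q t ≠ 0} : Set _) := by rw [hU]; exact Set.notMem_empty t
      simpa [sub_eq_zero] using not_not.1 this
    exact measure_ext_of_charFn P Q hchar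
  · intro h
    subst h
    simp [CFD2]
end

section
/- (Equivalence of CFD and MMD when the kernel is the Fourier transform of the weighting distribution.) Let P, Q, and ω be probability measures on ℝ^m, and define the kernel κ : ℝ^m × ℝ^m → ℝ by κ(x, y) = ∫ cos(⟨t, x − y⟩) dω(t). Then the squared maximum mean discrepancy with kernel κ equals the squared characteristic function distance with weighting ω: ∫∫ κ(x, x') d(P ⊗ P)(x, x') + ∫∫ κ(y, y') d(Q ⊗ Q)(y, y') − 2 ∫∫ κ(x, y) d(P ⊗ Q)(x, y) = CFD²_ω(P, Q). -/
open MeasureTheory Filter Topology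
open scoped NNReal

section Aux

variable {m : ℕ}

local notation "E" => EuclideanSpace ℝ (Fin m)

lemma exp_inner_integrable_s8 (μ : Measure E) [IsProbabilityMeasure μ] (t : E) (c : ℂ)
    (hc : c.re = 0) :
    Integrable (fun x : E => Complex.exp (c * ((inner ℝ t x : ℝ) : ℂ))) μ := by
  refine (integrable_const (1:ℝ)).mono' ?_ ?_
  · exact (Complex.continuous_exp.comp (continuous_const.mul
      (Complex.continuous_ofReal.comp (Continuous.inner continuous_const continuous_id)))).aestronglyMeasurable
  · filter_upwards with x
    rw [Complex.norm_exp]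
    simp [hc]

lemma charFn_mul_conj (μ ν : Measure E) [IsProbabilityMeasure μ] [IsProbabilityMeasure ν]
    (t : E) :
    (charFn μ t * (starRingEnd ℂ) (charFn ν t)).re
      = ∫ p : E × E, Real.cos (inner ℝ t (p.1 - p.2) : ℝ) ∂(μ.prod ν) := by
  have h1 : (starRingEnd ℂ) (charFn ν t)
      = ∫ y, Complex.exp ((-Complex.I) * ((inner ℝ t y : ℝ) : ℂ)) ∂ν := by
    rw [charFn, ← integral_conj]
    congr 1; funext y
    rw [← Complex.exp_conj]
    congr 1
    simp [Complex.ext_iff]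
  rw [charFn, h1, ← integral_prod_mul]
  have h2 : ∀ p : E × E,
      Complex.exp (Complex.I * ((inner ℝ t p.1 : ℝ) : ℂ))
        * Complex.exp ((-Complex.I) * ((inner ℝ t p.2 : ℝ) : ℂ))
      = Complex.exp (((inner ℝ t (p.1 - p.2) : ℝ) : ℂ) * Complex.I) := by
    intro p
    rw [← Complex.exp_add, inner_sub_right]
    push_cast
    ring_nf
  have hint : Integrable
      (fun p : E × E => Complex.exp (((inner ℝ t (p.1 - p.2) : ℝ) : ℂ) * Complex.I))
      (μ.prod ν) := by
    refine (integrable_const (1:ℝ)).mono' ?_ ?_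
    · exact (Complex.continuous_exp.comp ((Complex.continuous_ofReal.comp
        (Continuous.inner continuous_const (continuous_fst.sub continuous_snd))).mul
        continuous_const)).aestronglyMeasurable
    · filter_upwards with p
      rw [Complex.norm_exp]
      simp
  calc (∫ p : E × E, Complex.exp (Complex.I * ((inner ℝ t p.1 : ℝ) : ℂ))
        * Complex.exp ((-Complex.I) * ((inner ℝ t p.2 : ℝ) : ℂ)) ∂(μ.prod ν)).re
      = (∫ p : E × E, Complex.exp (((inner ℝ t (p.1 - p.2) : ℝ) : ℂ) * Complex.I) ∂(μ.prod ν)).re := by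
        congr 1; exact integral_congr_ae (Filter.Eventually.of_forall h2)
    _ = ∫ p : E × E, Real.cos (inner ℝ t (p.1 - p.2) : ℝ) ∂(μ.prod ν) := by
        rw [← RCLike.re_to_complex, ← integral_re hint]
        congr 1; funext p
        rw [RCLike.re_to_complex]
        exact Complex.exp_ofReal_mul_I_re _

lemma integrable_cos_prod (μ ν ω : Measure E) [IsProbabilityMeasure μ] [IsProbabilityMeasure ν]
    [IsProbabilityMeasure ω] :
    Integrable (fun p : (E × E) × E => Real.cos (inner ℝ p.2 (p.1.1 - p.1.2) : ℝ))
      ((μ.prod ν).prod ω) := by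
  have hi : OpensMeasurableSpace ((E × E) × E) := by infer_instance
  refine (integrable_const (1:ℝ)).mono' ?_ ?_
  · exact (Real.continuous_cos.comp (Continuous.inner continuous_snd
      ((continuous_fst.comp continuous_fst).sub (continuous_snd.comp continuous_fst)))).aestronglyMeasurable
  · filter_upwards with p
    rw [Real.norm_eq_abs]
    exact Real.abs_cos_le_one _

end Aux

/-- with the kernel κ(x,y) = ∫ cos⟨t, x − y⟩ dω(t), the squared MMD with kernel κ
equals CFD²_ω. -/
theorem mmd_eq_cfd
    {m : ℕ}
    (P Q ω : Measure (EuclideanSpace ℝ (Fin m)))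
    (hP : IsProbabilityMeasure P) (hQ : IsProbabilityMeasure Q)
    (hω : IsProbabilityMeasure ω)
    (κ : EuclideanSpace ℝ (Fin m) → EuclideanSpace ℝ (Fin m) → ℝ)
    (hκ : ∀ x y, κ x y = ∫ t, Real.cos (inner ℝ t (x - y) : ℝ) ∂ω) :
    (∫ p, κ p.1 p.2 ∂(P.prod P)) + (∫ p, κ p.1 p.2 ∂(Q.prod Q))
      - 2 * (∫ p, κ p.1 p.2 ∂(P.prod Q)) = CFD2 ω P Q := by
  haveI := hP; haveI := hQ; haveI := hω
  have key : ∀ (μ ν : Measure (EuclideanSpace ℝ (Fin m))), IsProbabilityMeasure μ → IsProbabilityMeasure ν →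
      ∫ p, κ p.1 p.2 ∂(μ.prod ν)
        = ∫ t, (charFn μ t * (starRingEnd ℂ) (charFn ν t)).re ∂ω := by
    intro μ ν h1 h2
    calc ∫ p, κ p.1 p.2 ∂(μ.prod ν)
        = ∫ p : EuclideanSpace ℝ (Fin m) × EuclideanSpace ℝ (Fin m),
            ∫ t, Real.cos (inner ℝ t (p.1 - p.2) : ℝ) ∂ω ∂(μ.prod ν) := by
          simp_rw [hκ]
      _ = ∫ t, ∫ p : EuclideanSpace ℝ (Fin m) × EuclideanSpace ℝ (Fin m),
            Real.cos (inner ℝ t (p.1 - p.2) : ℝ) ∂(μ.prod ν) ∂ω :=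
          integral_integral_swap (integrable_cos_prod μ ν ω)
      _ = ∫ t, (charFn μ t * (starRingEnd ℂ) (charFn ν t)).re ∂ω :=
          integral_congr_ae (Filter.Eventually.of_forall fun t =>
            (charFn_mul_conj μ ν t).symm)
  have hgint : ∀ (μ ν : Measure (EuclideanSpace ℝ (Fin m))), IsProbabilityMeasure μ → IsProbabilityMeasure ν →
      Integrable (fun t => (charFn μ t * (starRingEnd ℂ) (charFn ν t)).re) ω := by
    intro μ ν h1 h2
    have h3 := ((integrable_cos_prod μ ν ω).swap).integral_prod_left
    exact h3.congr (Filter.Eventually.of_forall fun t => (charFn_mul_conj μ ν t).symm)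
  have hpt : ∀ t, (‖charFn P t - charFn Q t‖ : ℝ) ^ 2
      = (charFn P t * (starRingEnd ℂ) (charFn P t)).re
        + (charFn Q t * (starRingEnd ℂ) (charFn Q t)).re
        - 2 * (charFn P t * (starRingEnd ℂ) (charFn Q t)).re := by
    intro t
    have hz : ∀ z : ℂ, Complex.normSq z = (z * (starRingEnd ℂ) z).re := fun z => by
      rw [Complex.mul_conj, Complex.ofReal_re]
    rw [Complex.sq_norm, Complex.normSq_sub, hz, hz]
  have hCFD : CFD2 ω P Q
      = (∫ t, (charFn P t * (starRingEnd ℂ) (charFn P t)).re ∂ω)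
        + (∫ t, (charFn Q t * (starRingEnd ℂ) (charFn Q t)).re ∂ω)
        - 2 * (∫ t, (charFn P t * (starRingEnd ℂ) (charFn Q t)).re ∂ω) := by
    have h1 := hgint P P hP hP
    have h2 := hgint Q Q hQ hQ
    have h3 := hgint P Q hP hQ
    have h12 : Integrable (fun t => (charFn P t * (starRingEnd ℂ) (charFn P t)).re
        + (charFn Q t * (starRingEnd ℂ) (charFn Q t)).re) ω := h1.add h2
    have h3' : Integrable (fun t => 2 * (charFn P t * (starRingEnd ℂ) (charFn Q t)).re) ω :=
      h3.const_mul 2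
    rw [CFD2]
    simp_rw [hpt]
    rw [integral_sub h12 h3', integral_add h1 h2, integral_const_mul]
  rw [key P P hP hP, key Q Q hQ hQ, key P Q hP hQ, hCFD]
end
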